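/- arXiv:math/9707225 — 7 statements merged into one kernel-verified Lean document; each statement's English description precedes it below -/
import Mathlib

section
/- Let F be a free abelian group and A a subgroup of F. Then there is a subgroup B of F with A ⊆ B, the cardinality of B at most the maximum of the cardinality of A and ℵ₀, and F/B free. -/
universe u

/-- If `F` is a free abelian group and `A` a subgroup of `F`, then there is a subgroup `B`
of `F` with `A ⊆ B`, `|B| ≤ max |A| ℵ₀`, and `F/B` free. -/
theorem stmt6 {F : Type u} [AddCommGroup F] (hF : Module.Free ℤ F) (A : AddSubgroup F) :
    ∃ B : AddSubgroup F, A ≤ B ∧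
      Cardinal.mk B ≤ max (Cardinal.mk A) Cardinal.aleph0 ∧
      Module.Free ℤ (F ⧸ B) := by
  classical
  set I := Module.Free.ChooseBasisIndex ℤ F with hI
  let e : F ≃ₗ[ℤ] (I →₀ ℤ) := (Module.Free.chooseBasis ℤ F).repr
  set S : Set I := ⋃ a : A, ((e (a : F)).support : Set I) with hS
  set q : Submodule ℤ (I →₀ ℤ) := Finsupp.supported ℤ ℤ S with hq
  set p : Submodule ℤ F := q.map (e.symm : (I →₀ ℤ) →ₗ[ℤ] F) with hp
  have hmap : p.map (e : F →ₗ[ℤ] (I →₀ ℤ)) = q := by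
    ext x
    simp [hp]
  refine ⟨p.toAddSubgroup, ?_, ?_, ?_⟩
  · intro a ha
    have hmem : e a ∈ q := by
      rw [hq, Finsupp.mem_supported]
      exact Set.subset_iUnion (fun a : A => ((e (a : F)).support : Set I)) ⟨a, ha⟩
    have : a ∈ p := ⟨e a, hmem, by simp⟩
    exact this
  · -- cardinality
    have hpq : Cardinal.mk p = Cardinal.mk q :=
      ((e.symm.submoduleMap q).toEquiv.symm.cardinal_eq)
    have hqS : Cardinal.mk q = Cardinal.mk (S →₀ ℤ) :=
      (Finsupp.supportedEquivFinsupp (M := ℤ) (R := ℤ) S).toEquiv.cardinal_eq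
    have hSle : Cardinal.mk S ≤ max (Cardinal.mk A) Cardinal.aleph0 := by
      calc Cardinal.mk S ≤ Cardinal.mk A * ⨆ a : A, Cardinal.mk ((e (a : F)).support : Set I) :=
            Cardinal.mk_iUnion_le _
        _ ≤ Cardinal.mk A * Cardinal.aleph0 := by
            gcongr
            exact ciSup_le' fun a => le_of_lt (Cardinal.lt_aleph0_of_finite _)
        _ ≤ max (max (Cardinal.mk A) Cardinal.aleph0) Cardinal.aleph0 := Cardinal.mul_le_max _ _
        _ = max (Cardinal.mk A) Cardinal.aleph0 := by rw [max_assoc, max_self]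
    have hgoal : Cardinal.mk p ≤ max (Cardinal.mk A) Cardinal.aleph0 := by
      rw [hpq, hqS]
      rcases isEmpty_or_nonempty S with h | h
      · exact le_max_of_le_right Cardinal.mk_le_aleph0
      · have := Cardinal.mk_finsupp_lift_of_infinite' S ℤ
        simp only [Cardinal.mk_int, Cardinal.lift_aleph0, Cardinal.lift_uzero] at this
        rw [this]
        exact max_le hSle (le_max_right _ _)
    exact hgoal
  · -- freeness
    have hcompl : IsCompl q (Finsupp.supported ℤ ℤ Sᶜ) := by
      constructor
      · exact Finsupp.disjoint_supported_supported disjoint_compl_right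
      · rw [codisjoint_iff, hq, ← Finsupp.supported_union, Set.union_compl_self,
          Finsupp.supported_univ]
    let e1 : ((I →₀ ℤ) ⧸ q) ≃ₗ[ℤ] (Finsupp.supported ℤ ℤ Sᶜ) :=
      Submodule.quotientEquivOfIsCompl _ _ hcompl
    let e2 : (F ⧸ p) ≃ₗ[ℤ] ((I →₀ ℤ) ⧸ q) := Submodule.Quotient.equiv p q e hmap
    have hfree : Module.Free ℤ (F ⧸ p) :=
      Module.Free.of_equiv
        ((Finsupp.supportedEquivFinsupp (M := ℤ) (R := ℤ) Sᶜ).symm.trans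
          (e1.symm.trans e2.symm))
    let e3 : (F ⧸ p.toAddSubgroup) ≃+ (F ⧸ p) := AddEquiv.refl _
    exact Module.Free.of_equiv (M := F ⧸ p) e3.toIntLinearEquiv.symm
end

section
/- Let κ be a regular uncountable cardinal, G an abelian group with a filtration ⟨G_i : i < κ⟩, and h : H → G a surjective homomorphism of abelian groups. Assume that G/G_{i+1} is κ-free for every i < κ. Let P_{h,H,G} be the partial order whose conditions are the liftings q (with respect to h) whose domain is a subgroup D of G of cardinality < κ with G/D κ-free, ordered by extension. Then for every ordinal α < κ the set of conditions q such that the domain of q equals G_{i+1} for some i with α ≤ i < κ is dense in P_{h,H,G}: every condition has an extension in this set. -/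
/- Since `W := K/D` (the image of `K` in `G/D`) is projective, `K ≅ D ⊕ W` via a section
`s : W → K`; the extension is `q` on the `D`-component plus a lift through `h` of `s` on `W`. -/
theorem exists_lifting_extension_of_projective {H G : Type*} [AddCommGroup H] [AddCommGroup G]
    {h : H →+ G} (hsurj : Function.Surjective h)
    {D K : AddSubgroup G} (hDK : D ≤ K) [Module.Projective ℤ (K.map (QuotientAddGroup.mk' D))]
    (q : D →+ H) (hq : ∀ x : D, h (q x) = x) :
    ∃ q' : K →+ H, (∀ x : K, h (q' x) = x) ∧
      ∀ (x : G) (hx : x ∈ D), q' ⟨x, hDK hx⟩ = q ⟨x, hx⟩ := by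
  set π := (QuotientAddGroup.mk' D).addSubgroupMap K
  obtain ⟨s, hs⟩ := Module.projective_lifting_property π.toIntLinearMap LinearMap.id
    ((QuotientAddGroup.mk' D).addSubgroupMap_surjective K)
  obtain ⟨l, hl⟩ := Module.projective_lifting_property h.toIntLinearMap
    (K.subtype.toIntLinearMap ∘ₗ s) hsurj
  have hπs (w) : π (s w) = w := LinearMap.congr_fun hs w
  have hls (w) : h (l w) = s w := LinearMap.congr_fun hl w
  have hmem (x : K) : (x : G) - s (π x) ∈ D := by
    rw [← QuotientAddGroup.eq_iff_sub_mem]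
    exact congrArg Subtype.val (hπs (π x)).symm
  set e : K →+ D := (K.subtype - K.subtype.comp (s.toAddMonoidHom.comp π)).codRestrict D hmem
  have hπD (x : G) (hx : x ∈ D) : π ⟨x, hDK hx⟩ = 0 :=
    Subtype.ext ((QuotientAddGroup.eq_zero_iff x).mpr hx)
  refine ⟨q.comp e + l.toAddMonoidHom.comp π, fun x => ?_, fun x hx => ?_⟩
  · change h (q (e x) + l (π x)) = x
    rw [map_add, hq, hls]
    exact sub_add_cancel _ _
  · have he : e ⟨x, hDK hx⟩ = ⟨x, hx⟩ := by
      ext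
      change x - s (π ⟨x, hDK hx⟩) = x
      rw [hπD x hx, map_zero, ZeroMemClass.coe_zero, sub_zero]
    change q (e _) + l (π _) = _
    rw [he, hπD x hx, map_zero, add_zero]

theorem Cardinal.exists_lt_ord_subset_of_mk_lt {X : Type u} {κ : Cardinal.{u}}
    (hreg : κ.IsRegular) {S : Ordinal.{u} → Set X}
    (hmono : ∀ i j : Ordinal.{u}, i ≤ j → j < κ.ord → S i ⊆ S j)
    (hunion : ∀ x : X, ∃ i < κ.ord, x ∈ S i) {D : Set X} (hD : Cardinal.mk D < κ) :
    ∃ j < κ.ord, D ⊆ S j := by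
  choose ix hix hmem using fun x : D => hunion x
  have hsup : iSup ix < κ.ord := Ordinal.iSup_lt_of_lt_cof (by rwa [hreg.cof_ord]) hix
  exact ⟨iSup ix, hsup, fun x hx =>
    hmono _ _ (Ordinal.le_iSup ix ⟨x, hx⟩) hsup (hmem ⟨x, hx⟩)⟩

theorem stmt7_general {H G : Type u} [AddCommGroup H] [AddCommGroup G]
    (κ : Cardinal.{u}) (hreg : κ.IsRegular)
    (Gf : Ordinal.{u} → AddSubgroup G)
    (hmono : ∀ i j : Ordinal.{u}, i ≤ j → j < κ.ord → Gf i ≤ Gf j)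
    (hcard : ∀ i < κ.ord, Cardinal.mk (Gf i) < κ)
    (hunion : ∀ x : G, ∃ i < κ.ord, x ∈ Gf i)
    (h : H →+ G) (hsurj : Function.Surjective h)
    (α : Ordinal.{u}) (hα : α < κ.ord)
    (D : AddSubgroup G) (q : D →+ H) (hq : ∀ x : D, h (q x) = (x : G))
    (hDcard : Cardinal.mk D < κ)
    (hDfree : ∀ B : AddSubgroup (G ⧸ D), Cardinal.mk B < κ → Module.Free ℤ B) :
    ∃ i : Ordinal.{u}, α ≤ i ∧ i < κ.ord ∧
      ∃ (hle : D ≤ Gf (i + 1)) (q' : Gf (i + 1) →+ H),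
        (∀ x : Gf (i + 1), h (q' x) = (x : G)) ∧
        ∀ (x : G) (hx : x ∈ D), q' ⟨x, hle hx⟩ = q ⟨x, hx⟩ := by
  obtain ⟨j, hj, hDj⟩ := Cardinal.exists_lt_ord_subset_of_mk_lt (S := fun i => (Gf i : Set G))
    hreg hmono hunion hDcard
  set i := max α j
  have hi : i < κ.ord := max_lt hα hj
  have hi1 : i + 1 < κ.ord := (Cardinal.isSuccLimit_ord hreg.aleph0_le).succ_lt hi
  have hle : D ≤ Gf (i + 1) :=
    hDj.trans (hmono j (i + 1) ((le_max_right α j).trans (Order.le_succ i)) hi1)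
  have : Module.Free ℤ ((Gf (i + 1)).map (QuotientAddGroup.mk' D)) :=
    hDfree _ (Cardinal.mk_image_le.trans_lt (hcard _ hi1))
  obtain ⟨q', hq'h, hq'q⟩ := exists_lifting_extension_of_projective hsurj hle q hq
  exact ⟨i, le_max_left α j, hi, hle, q', hq'h, hq'q⟩

/-- Let `κ` be a regular uncountable cardinal, `⟨G_i : i < κ⟩` a filtration of the abelian
group `G`, and `h : H → G` a surjective homomorphism such that `G/G_{i+1}` is `κ`-free for
every `i < κ`.  The forcing notion `P_{h,H,G}` consists of liftings `q : D → H` (i.e.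
`h ∘ q = id_D`) whose domain `D` is a subgroup of `G` of cardinality `< κ` with `G/D`
`κ`-free, ordered by extension.  Then for every `α < κ`, every condition `(D, q)` has an
extension whose domain is `G_{i+1}` for some `i` with `α ≤ i < κ`. -/
theorem stmt7 {H G : Type u} [AddCommGroup H] [AddCommGroup G]
    (κ : Cardinal.{u}) (hreg : κ.IsRegular) (hunc : Cardinal.aleph0 < κ)
    (Gf : Ordinal.{u} → AddSubgroup G)
    (hmono : ∀ i j : Ordinal.{u}, i ≤ j → j < κ.ord → Gf i ≤ Gf j)
    (hcard : ∀ i < κ.ord, Cardinal.mk (Gf i) < κ)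
    (hcont : ∀ i < κ.ord, Order.IsSuccLimit i → Gf i = ⨆ j : Ordinal.{u}, ⨆ _ : j < i, Gf j)
    (hunion : ∀ x : G, ∃ i < κ.ord, x ∈ Gf i)
    (h : H →+ G) (hsurj : Function.Surjective h)
    (hfree : ∀ i < κ.ord, ∀ B : AddSubgroup (G ⧸ Gf (i + 1)),
      Cardinal.mk B < κ → Module.Free ℤ B)
    (α : Ordinal.{u}) (hα : α < κ.ord)
    (D : AddSubgroup G) (q : D →+ H) (hq : ∀ x : D, h (q x) = (x : G))
    (hDcard : Cardinal.mk D < κ)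
    (hDfree : ∀ B : AddSubgroup (G ⧸ D), Cardinal.mk B < κ → Module.Free ℤ B) :
    ∃ i : Ordinal.{u}, α ≤ i ∧ i < κ.ord ∧
      ∃ (hle : D ≤ Gf (i + 1)) (q' : Gf (i + 1) →+ H),
        (∀ x : Gf (i + 1), h (q' x) = (x : G)) ∧
        ∀ (x : G) (hx : x ∈ D), q' ⟨x, hle hx⟩ = q ⟨x, hx⟩ :=
  stmt7_general κ hreg Gf hmono hcard hunion h hsurj α hα D q hq hDcard hDfree
end

section
/- Let λ be a regular uncountable cardinal, S ⊆ {δ < λ⁺ : cf(δ) = λ}, and C̄ = ⟨C_δ : δ ∈ S⟩ a sequence where each C_δ is a club of δ of order type λ such that every α ∈ nacc(C_δ) has cofinality < λ. Then the forcing notion Q¹_{C̄} is (<λ)-complete: every ≤-increasing sequence of conditions of length < λ has an upper bound in Q¹_{C̄}. -/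
/-- `C` is a club of the limit ordinal `δ`: a subset of `δ`, unbounded in `δ`,
closed below `δ`. -/
def IsClubBelow (C : Set Ordinal.{0}) (δ : Ordinal.{0}) : Prop :=
  (∀ α ∈ C, α < δ) ∧ (∀ α < δ, ∃ β ∈ C, α ≤ β) ∧
    ∀ B ⊆ C, B.Nonempty → sSup B < δ → sSup B ∈ C

/-- The non-accumulation points of a set `C` of ordinals:
`nacc C = C ∖ {α ∈ C : α = sup (C ∩ α)}`. -/
def nacc (C : Set Ordinal.{0}) : Set Ordinal.{0} :=
  {α ∈ C | sSup (C ∩ Set.Iio α) ≠ α}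

/-- The order type of a set of ordinals. -/
noncomputable def otype (C : Set Ordinal.{0}) : Ordinal.{1} :=
  Ordinal.type (Subrel ((· < ·) : Ordinal.{0} → Ordinal.{0} → Prop) (· ∈ C))

/-- Conditions of the forcing notion `Q¹_{C̄}`: closed bounded subsets `e` of `λ⁺` such
that for every `δ ∈ S` with `δ ≤ sup e`, the set `e ∩ nacc (C δ)` is bounded below `δ`. -/
def Q1Cond (lamPlus : Ordinal.{0}) (S : Set Ordinal.{0})
    (C : Ordinal.{0} → Set Ordinal.{0}) (e : Set Ordinal.{0}) : Prop :=
  (∀ α ∈ e, α < lamPlus) ∧ sSup e < lamPlus ∧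
    (∀ B ⊆ e, B.Nonempty → sSup B ∈ e) ∧
    ∀ δ ∈ S, δ ≤ sSup e → ∃ γ < δ, ∀ α ∈ e ∩ nacc (C δ), α ≤ γ

/-- The order of `Q¹_{C̄}` is end extension: `e₀ ≤ e₁` iff `e₀ = e₁ ∩ (sup e₀ + 1)`. -/
def Q1Le (e₀ e₁ : Set Ordinal.{0}) : Prop :=
  e₀ = e₁ ∩ Set.Iic (sSup e₀)

/-! The union `U` of a chain of conditions, closed off by its supremum `σ`, end-extends every
member, since members are initial segments of one another. It is closed: a set `B ⊆ U` with
`sup B < σ` lies below some `sup eᵢ`, hence inside the closed set `eᵢ`. As `λ⁺` is regular and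
the chain has length `< λ`, `σ < λ⁺`. Finally, for `δ ∈ S` with `δ ≤ σ`, `cf δ = λ` exceeds the
length of the chain, so `δ ≤ sup eᵢ` for some `i`; then `U ∩ nacc C_δ ⊆ δ` lies in `eᵢ`, where it
is bounded below `δ`. -/

open Cardinal Ordinal Set

section Conditions

variable {κ : Ordinal.{0}} {S : Set Ordinal.{0}} {C : Ordinal.{0} → Set Ordinal.{0}}
  {e e₀ e₁ : Set Ordinal.{0}}

theorem Q1Cond.bddAbove (h : Q1Cond κ S C e) : BddAbove e :=
  ⟨κ, fun α hα => (h.1 α hα).le⟩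

theorem Q1Cond.sSup_mem (h : Q1Cond κ S C e) (hne : e.Nonempty) : sSup e ∈ e :=
  h.2.2.1 e subset_rfl hne

theorem q1Cond_empty (hκ : 0 < κ) (hS : 0 ∉ S) : Q1Cond κ S C ∅ := by
  refine ⟨by simp, by simpa using hκ, by simp [subset_empty_iff], fun δ hδ hle => ?_⟩
  rw [csSup_empty, bot_eq_zero', nonpos_iff_eq_zero] at hle
  exact absurd (hle ▸ hδ) hS

theorem Q1Le.subset (h : Q1Le e₀ e₁) : e₀ ⊆ e₁ :=
  fun _ hα => (Eq.subset h hα).1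

theorem Q1Le.mem_of_le_sSup (h : Q1Le e₀ e₁) {α : Ordinal} (hα : α ∈ e₁) (hle : α ≤ sSup e₀) :
    α ∈ e₀ :=
  Eq.superset h ⟨hα, hle⟩

end Conditions

section Chain

variable {κ : Ordinal.{0}} {S : Set Ordinal.{0}} {C : Ordinal.{0} → Set Ordinal.{0}}
  {ι : Type*} {e : ι → Set Ordinal.{0}}

noncomputable def chainSup (e : ι → Set Ordinal.{0}) : Ordinal.{0} :=
  ⨆ i, sSup (e i)

noncomputable def unionClosure (e : ι → Set Ordinal.{0}) : Set Ordinal.{0} :=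
  insert (chainSup e) (⋃ i, e i)

theorem mem_of_mem_iUnion_of_le_sSup [LinearOrder ι] (he : ∀ i j, i ≤ j → Q1Le (e i) (e j))
    {i : ι} {α : Ordinal} (hα : α ∈ ⋃ j, e j) (hle : α ≤ sSup (e i)) : α ∈ e i := by
  obtain ⟨j, hj⟩ := mem_iUnion.1 hα
  rcases le_total j i with hji | hij
  · exact (he j i hji).subset hj
  · exact (he i j hij).mem_of_le_sSup hj hle

theorem le_chainSup (hcond : ∀ i, Q1Cond κ S C (e i)) (i : ι) : sSup (e i) ≤ chainSup e :=
  le_ciSup ⟨κ, forall_mem_range.2 fun i => (hcond i).2.1.le⟩ i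

theorem isGreatest_chainSup_unionClosure (hcond : ∀ i, Q1Cond κ S C (e i)) :
    IsGreatest (unionClosure e) (chainSup e) := by
  refine ⟨mem_insert _ _, fun α hα => ?_⟩
  obtain rfl | hα := hα
  · exact le_rfl
  obtain ⟨i, hi⟩ := mem_iUnion.1 hα
  exact (le_csSup (hcond i).bddAbove hi).trans (le_chainSup hcond i)

theorem q1Le_unionClosure [LinearOrder ι] (hcond : ∀ i, Q1Cond κ S C (e i))
    (he : ∀ i j, i ≤ j → Q1Le (e i) (e j)) (hne : (⋃ i, e i).Nonempty) (i : ι) :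
    Q1Le (e i) (unionClosure e) := by
  refine Subset.antisymm (fun α hα => ⟨mem_insert_of_mem _ (mem_iUnion_of_mem i hα),
    le_csSup (hcond i).bddAbove hα⟩) ?_
  rintro α ⟨rfl | hα, hle⟩
  · obtain ⟨β, hβ⟩ := hne
    have hβσ : β ≤ chainSup e :=
      (isGreatest_chainSup_unionClosure hcond).2 (mem_insert_of_mem _ hβ)
    have hne_i : (e i).Nonempty := ⟨β, mem_of_mem_iUnion_of_le_sSup he hβ (hβσ.trans hle)⟩
    rw [hle.antisymm (le_chainSup hcond i)]
    exact (hcond i).sSup_mem hne_i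
  · exact mem_of_mem_iUnion_of_le_sSup he hα hle

theorem sSup_mem_unionClosure [LinearOrder ι] (hcond : ∀ i, Q1Cond κ S C (e i))
    (he : ∀ i j, i ≤ j → Q1Le (e i) (e j)) {B : Set Ordinal} (hB : B ⊆ unionClosure e)
    (hBne : B.Nonempty) : sSup B ∈ unionClosure e := by
  have hmax := isGreatest_chainSup_unionClosure hcond
  have hBbdd : BddAbove B := ⟨chainSup e, fun b hb => hmax.2 (hB hb)⟩
  rcases (csSup_le hBne fun b hb => hmax.2 (hB hb)).eq_or_lt with hσ | hσ
  · exact hσ ▸ hmax.1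
  obtain ⟨i, hi⟩ := exists_lt_of_lt_ciSup' hσ
  have hBi : B ⊆ e i := by
    intro b hb
    have hbB := le_csSup hBbdd hb
    obtain rfl | hbU := hB hb
    · exact absurd hσ hbB.not_gt
    · exact mem_of_mem_iUnion_of_le_sSup he hbU (hbB.trans hi.le)
  exact mem_insert_of_mem _ (mem_iUnion_of_mem i ((hcond i).2.2.1 B hBi hBne))

theorem q1Cond_unionClosure [LinearOrder ι] (hcond : ∀ i, Q1Cond κ S C (e i))
    (he : ∀ i j, i ≤ j → Q1Le (e i) (e j)) (hσ : chainSup e < κ)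
    (hC : ∀ δ ∈ S, ∀ α ∈ C δ, α < δ)
    (hcof : ∀ δ ∈ S, δ ≤ chainSup e → ∃ i, δ ≤ sSup (e i)) :
    Q1Cond κ S C (unionClosure e) := by
  have hmax := isGreatest_chainSup_unionClosure hcond
  refine ⟨fun α hα => (hmax.2 hα).trans_lt hσ, hmax.csSup_eq ▸ hσ,
    fun B hB hBne => sSup_mem_unionClosure hcond he hB hBne, fun δ hδ hle => ?_⟩
  obtain ⟨i, hi⟩ := hcof δ hδ (hmax.csSup_eq ▸ hle)
  obtain ⟨γ, hγ, hbound⟩ := (hcond i).2.2.2 δ hδ hi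
  refine ⟨γ, hγ, ?_⟩
  rintro α ⟨hα, hαC⟩
  have hαδ : α < δ := hC δ hδ α hαC.1
  obtain rfl | hαU := hα
  · exact (lt_irrefl _ (hαδ.trans_le (hi.trans (le_chainSup hcond i)))).elim
  · exact hbound α ⟨mem_of_mem_iUnion_of_le_sSup he hαU (hαδ.le.trans hi), hαC⟩

end Chain

theorem iSup_Iio_lt_of_card_lt_cof {δ₀ a : Ordinal.{u}} {f : Iio δ₀ → Ordinal.{u}}
    (h : δ₀.card < a.cof) (hf : ∀ i, f i < a) : ⨆ i, f i < a :=
  lift_iSup_lt_of_lt_cof (by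
    rwa [Cardinal.mk_Iio_ordinal, Cardinal.lift_id'.{u, u + 1}, ← lift_cof, Cardinal.lift_lt]) hf

theorem stmt8_general (lam : Cardinal.{0}) (hunc : Cardinal.aleph0 < lam)
    (S : Set Ordinal.{0}) (hS : ∀ δ ∈ S, δ < (Order.succ lam).ord ∧ δ.cof = lam)
    (C : Ordinal.{0} → Set Ordinal.{0})
    (hC : ∀ δ ∈ S, IsClubBelow (C δ) δ ∧ otype (C δ) = Ordinal.lift.{1} lam.ord ∧
      ∀ α ∈ nacc (C δ), α.cof < lam)
    (δ₀ : Ordinal.{0}) (hδ₀ : δ₀ < lam.ord) (e : Ordinal.{0} → Set Ordinal.{0})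
    (hcond : ∀ i < δ₀, Q1Cond (Order.succ lam).ord S C (e i))
    (hmono : ∀ i j : Ordinal.{0}, i ≤ j → j < δ₀ → Q1Le (e i) (e j)) :
    ∃ e' : Set Ordinal.{0}, Q1Cond (Order.succ lam).ord S C e' ∧
      ∀ i < δ₀, Q1Le (e i) e' := by
  have hlam : 0 < lam := aleph0_pos.trans hunc
  have hlen : δ₀.card < lam := lt_ord.1 hδ₀
  let f : Iio δ₀ → Set Ordinal.{0} := fun i => e i
  have hcond' : ∀ i, Q1Cond (Order.succ lam).ord S C (f i) := fun i => hcond i i.2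
  have hchain : ∀ i j, i ≤ j → Q1Le (f i) (f j) := fun i j hij => hmono i j hij j.2
  rcases eq_empty_or_nonempty (⋃ i, f i) with hU | hU
  · have h0S : 0 ∉ S := fun h0 => hlam.ne (by simpa using (hS 0 h0).2)
    have hκ : 0 < (Order.succ lam).ord := ord_pos.2 (hlam.trans (Order.lt_succ lam))
    refine ⟨∅, q1Cond_empty hκ h0S, fun i hi => ?_⟩
    have hei : e i = ∅ := subset_empty_iff.1 (hU ▸ subset_iUnion f ⟨i, hi⟩)
    simp [Q1Le, hei]
  have hσ : chainSup f < (Order.succ lam).ord := by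
    refine iSup_Iio_lt_of_card_lt_cof ?_ fun i => (hcond' i).2.1
    rw [(isRegular_succ hunc.le).cof_ord]
    exact hlen.trans (Order.lt_succ lam)
  have hcof : ∀ δ ∈ S, δ ≤ chainSup f → ∃ i, δ ≤ sSup (f i) := by
    intro δ hδ hle
    by_contra! h
    exact (iSup_Iio_lt_of_card_lt_cof (by rwa [(hS δ hδ).2]) h).not_ge hle
  exact ⟨unionClosure f, q1Cond_unionClosure hcond' hchain hσ (fun δ hδ => (hC δ hδ).1.1) hcof,
    fun i hi => q1Le_unionClosure hcond' hchain hU ⟨i, hi⟩⟩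

/-- For a regular uncountable `λ`, `S ⊆ {δ < λ⁺ : cf δ = λ}` and `C̄ = ⟨C_δ : δ ∈ S⟩`
with each `C_δ` a club of `δ` of order type `λ` all of whose non-accumulation points have
cofinality `< λ`, the forcing notion `Q¹_{C̄}` is `(<λ)`-complete: every `≤`-increasing
sequence of conditions of length `< λ` has an upper bound. -/
theorem stmt8 (lam : Cardinal.{0}) (hreg : lam.IsRegular) (hunc : Cardinal.aleph0 < lam)
    (S : Set Ordinal.{0}) (hS : ∀ δ ∈ S, δ < (Order.succ lam).ord ∧ δ.cof = lam)
    (C : Ordinal.{0} → Set Ordinal.{0})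
    (hC : ∀ δ ∈ S, IsClubBelow (C δ) δ ∧ otype (C δ) = Ordinal.lift.{1} lam.ord ∧
      ∀ α ∈ nacc (C δ), α.cof < lam)
    (δ₀ : Ordinal.{0}) (hδ₀ : δ₀ < lam.ord) (e : Ordinal.{0} → Set Ordinal.{0})
    (hcond : ∀ i < δ₀, Q1Cond (Order.succ lam).ord S C (e i))
    (hmono : ∀ i j : Ordinal.{0}, i ≤ j → j < δ₀ → Q1Le (e i) (e j)) :
    ∃ e' : Set Ordinal.{0}, Q1Cond (Order.succ lam).ord S C e' ∧
      ∀ i < δ₀, Q1Le (e i) e' :=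
  stmt8_general lam hunc S hS C hC δ₀ hδ₀ e hcond hmono
end

section
/- Let λ be a regular uncountable cardinal, S ⊆ {δ < λ⁺ : cf(δ) = λ}, C̄ = ⟨C_δ : δ ∈ S⟩ a sequence where each C_δ is a club of δ of order type λ, and h̄ = ⟨h_δ : δ ∈ S⟩ with h_δ : C_δ → λ. Let δ₀ < λ⁺ be a limit ordinal and ⟨f_i : i < δ₀⟩ a ≤-increasing sequence of conditions of the forcing notion Q²_{C̄,h̄} such that sup_{i<δ₀} α_{f_i} ∉ S. Then the union ⋃_{i<δ₀} f_i is a condition of Q²_{C̄,h̄}, hence an upper bound of the sequence. -/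
/-- Conditions of the forcing notion `Q²_{C̄,h̄}`: pairs `(α, f)` with `α < λ⁺`
representing a function `f : α → λ` such that for every `δ ∈ S` with `δ ≤ α` there is
`γ < δ` with `f β = h δ β` for all `β ∈ C_δ ∖ γ`. -/
def Q2Cond (lam : Cardinal.{0}) (S : Set Ordinal.{0}) (C : Ordinal.{0} → Set Ordinal.{0})
    (h : Ordinal.{0} → Ordinal.{0} → Ordinal.{0})
    (α : Ordinal.{0}) (f : Ordinal.{0} → Ordinal.{0}) : Prop :=
  α < (Order.succ lam).ord ∧ (∀ β < α, f β < lam.ord) ∧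
    ∀ δ ∈ S, δ ≤ α → ∃ γ < δ, ∀ β ∈ C δ, γ ≤ β → f β = h δ β

/-- The order of `Q²_{C̄,h̄}` is extension of functions. -/
def Q2Le (α₀ : Ordinal.{0}) (f₀ : Ordinal.{0} → Ordinal.{0})
    (α₁ : Ordinal.{0}) (f₁ : Ordinal.{0} → Ordinal.{0}) : Prop :=
  α₀ ≤ α₁ ∧ ∀ β < α₀, f₁ β = f₀ β

/-!
Conditions are pairwise compatible along the chain, so their union is a function on
`α* = sup_{i<δ₀} α_i`, and `α* < λ⁺` because `λ⁺` is regular and `δ₀ < λ⁺`. The only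
`δ ∈ S` with `δ ≤ α*` that is not already below some `α_i` would be `α*` itself, which is
excluded; for `δ < α_i` the club `C_δ ⊆ δ` lies inside the domain of `f_i`, so the tail
agreement with `h_δ` is inherited from `f_i`.
-/

open Cardinal Set

theorem sSup_lt_ord_of_isRegular {κ : Cardinal.{u}} (hκ : κ.IsRegular) {δ₀ : Ordinal.{u}}
    (hδ₀ : δ₀ < κ.ord) {α : Ordinal.{u} → Ordinal.{u}} (hα : ∀ i < δ₀, α i < κ.ord) :
    sSup {β | ∃ i < δ₀, β = α i} < κ.ord := by
  have hrange : {β | ∃ i < δ₀, β = α i} = range fun i : Iio δ₀ ↦ α i := by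
    ext β
    simp [eq_comm]
  rw [hrange, ← iSup]
  apply Ordinal.lift_iSup_lt_of_lt_cof
  · rwa [← Ordinal.lift_cof, hκ.cof_ord, mk_Iio_ordinal, lift_lift, lift_lt, ← lt_ord]
  · exact fun i ↦ hα i.1 i.2

theorem lt_sSup_setOf_iff {δ₀ : Ordinal.{u}} {α : Ordinal.{u} → Ordinal.{u}}
    (hbdd : BddAbove {β | ∃ i < δ₀, β = α i}) {β : Ordinal.{u}} :
    β < sSup {β | ∃ i < δ₀, β = α i} ↔ ∃ i < δ₀, β < α i := by
  rw [lt_csSup_iff' hbdd]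
  simp

section Chain

variable {ι : Type*} [LinearOrder ι] {δ₀ : ι} {α : ι → Ordinal.{0}}
  {f : ι → Ordinal.{0} → Ordinal.{0}}

theorem Q2Le.eq_of_chain (hmono : ∀ i j, i ≤ j → j < δ₀ → Q2Le (α i) (f i) (α j) (f j))
    {i j : ι} (hi : i < δ₀) (hj : j < δ₀) {β : Ordinal.{0}} (hβi : β < α i) (hβj : β < α j) :
    f i β = f j β := by
  rcases le_total i j with hij | hji
  · exact ((hmono i j hij hj).2 β hβi).symm
  · exact (hmono j i hji hi).2 β hβj

noncomputable def chainUnion (δ₀ : ι) (α : ι → Ordinal.{0}) (f : ι → Ordinal.{0} → Ordinal.{0})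
    (β : Ordinal.{0}) : Ordinal.{0} :=
  open Classical in if hβ : ∃ i < δ₀, β < α i then f hβ.choose β else 0

theorem chainUnion_eq (hmono : ∀ i j, i ≤ j → j < δ₀ → Q2Le (α i) (f i) (α j) (f j))
    {i : ι} (hi : i < δ₀) {β : Ordinal.{0}} (hβ : β < α i) : chainUnion δ₀ α f β = f i β := by
  have hex : ∃ j < δ₀, β < α j := ⟨i, hi, hβ⟩
  rw [chainUnion, dif_pos hex]
  exact Q2Le.eq_of_chain hmono hex.choose_spec.1 hi hex.choose_spec.2 hβ

end Chain

theorem stmt10_general (lam : Cardinal.{0}) (hunc : Cardinal.aleph0 < lam)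
    (S : Set Ordinal.{0})
    (C : Ordinal.{0} → Set Ordinal.{0})
    (hC : ∀ δ ∈ S, IsClubBelow (C δ) δ ∧ otype (C δ) = Ordinal.lift.{1} lam.ord)
    (h : Ordinal.{0} → Ordinal.{0} → Ordinal.{0})
    (δ₀ : Ordinal.{0}) (hδ₀ : δ₀ < (Order.succ lam).ord)
    (α : Ordinal.{0} → Ordinal.{0}) (f : Ordinal.{0} → Ordinal.{0} → Ordinal.{0})
    (hcond : ∀ i < δ₀, Q2Cond lam S C h (α i) (f i))
    (hmono : ∀ i j : Ordinal.{0}, i ≤ j → j < δ₀ → Q2Le (α i) (f i) (α j) (f j))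
    (hsup : sSup {β : Ordinal.{0} | ∃ i < δ₀, β = α i} ∉ S) :
    ∃ f' : Ordinal.{0} → Ordinal.{0},
      Q2Cond lam S C h (sSup {β : Ordinal.{0} | ∃ i < δ₀, β = α i}) f' ∧
      ∀ i < δ₀, Q2Le (α i) (f i) (sSup {β : Ordinal.{0} | ∃ j < δ₀, β = α j}) f' := by
  have hsup_lt : sSup {β | ∃ i < δ₀, β = α i} < (Order.succ lam).ord :=
    sSup_lt_ord_of_isRegular (isRegular_succ hunc.le) hδ₀ fun i hi ↦ (hcond i hi).1
  have hbdd : BddAbove {β | ∃ i < δ₀, β = α i} := by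
    refine ⟨(Order.succ lam).ord, ?_⟩
    rintro β ⟨i, hi, rfl⟩
    exact (hcond i hi).1.le
  refine ⟨chainUnion δ₀ α f, ⟨hsup_lt, fun β hβ ↦ ?_, fun δ hδ hδle ↦ ?_⟩, fun i hi ↦
    ⟨le_csSup hbdd ⟨i, hi, rfl⟩, fun β hβ ↦ chainUnion_eq hmono hi hβ⟩⟩
  · obtain ⟨i, hi, hβi⟩ := (lt_sSup_setOf_iff hbdd).1 hβ
    rw [chainUnion_eq hmono hi hβi]
    exact (hcond i hi).2.1 β hβi
  · have hδlt := hδle.lt_of_ne (ne_of_mem_of_not_mem hδ hsup)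
    obtain ⟨i, hi, hδi⟩ := (lt_sSup_setOf_iff hbdd).1 hδlt
    obtain ⟨γ, hγ, htail⟩ := (hcond i hi).2.2 δ hδ hδi.le
    refine ⟨γ, hγ, fun β hβ hγβ ↦ ?_⟩
    rw [chainUnion_eq hmono hi (((hC δ hδ).1.1 β hβ).trans hδi)]
    exact htail β hβ hγβ

/-- For `λ` regular uncountable, `S ⊆ {δ < λ⁺ : cf δ = λ}`, clubs `C_δ` of `δ` of order
type `λ` and colourings `h_δ : C_δ → λ`: if `⟨f_i : i < δ₀⟩` is a `≤`-increasing sequence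
of conditions of `Q²_{C̄,h̄}` with `δ₀ < λ⁺` limit and `sup_{i<δ₀} α_{f_i} ∉ S`, then the
union of the `f_i` is a condition of `Q²_{C̄,h̄}`, hence an upper bound of the sequence. -/
theorem stmt10 (lam : Cardinal.{0}) (hreg : lam.IsRegular) (hunc : Cardinal.aleph0 < lam)
    (S : Set Ordinal.{0}) (hS : ∀ δ ∈ S, δ < (Order.succ lam).ord ∧ δ.cof = lam)
    (C : Ordinal.{0} → Set Ordinal.{0})
    (hC : ∀ δ ∈ S, IsClubBelow (C δ) δ ∧ otype (C δ) = Ordinal.lift.{1} lam.ord)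
    (h : Ordinal.{0} → Ordinal.{0} → Ordinal.{0})
    (hh : ∀ δ ∈ S, ∀ β ∈ C δ, h δ β < lam.ord)
    (δ₀ : Ordinal.{0}) (hlim : Order.IsSuccLimit δ₀) (hδ₀ : δ₀ < (Order.succ lam).ord)
    (α : Ordinal.{0} → Ordinal.{0}) (f : Ordinal.{0} → Ordinal.{0} → Ordinal.{0})
    (hcond : ∀ i < δ₀, Q2Cond lam S C h (α i) (f i))
    (hmono : ∀ i j : Ordinal.{0}, i ≤ j → j < δ₀ → Q2Le (α i) (f i) (α j) (f j))
    (hsup : sSup {β : Ordinal.{0} | ∃ i < δ₀, β = α i} ∉ S) :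
    ∃ f' : Ordinal.{0} → Ordinal.{0},
      Q2Cond lam S C h (sSup {β : Ordinal.{0} | ∃ i < δ₀, β = α i}) f' ∧
      ∀ i < δ₀, Q2Le (α i) (f i) (sSup {β : Ordinal.{0} | ∃ j < δ₀, β = α j}) f' :=
  stmt10_general lam hunc S C hC h δ₀ hδ₀ α f hcond hmono hsup
end

section
/- Let λ be a regular uncountable cardinal, S ⊆ {δ < λ⁺ : cf(δ) = λ}, C̄ = ⟨C_δ : δ ∈ S⟩ a sequence where each C_δ is a club of δ of order type λ, and h̄ = ⟨h_δ : δ ∈ S⟩ with h_δ : C_δ → λ. Then for every ordinal β < λ⁺ the set I_β = {f ∈ Q²_{C̄,h̄} : β < α_f} is dense in Q²_{C̄,h̄}: every condition f of Q²_{C̄,h̄} has an extension f' in Q²_{C̄,h̄} whose domain α_{f'} exceeds β. -/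
/-!
By induction on `b < λ⁺` we build a single `g` that agrees with `h_δ` on a tail of `C_δ` for
every `δ ∈ S` with `δ ≤ b`; the extension of `f` is then `f` followed by `g` on `[α_f, b)`.
In the induction step pick a cofinal `E ⊆ b` of order type `cf b ≤ λ` and let `g ξ := g_e ξ`
for the least `e ∈ E` above `ξ`, where `g_e` comes from the induction hypothesis. Since
`cf δ = λ` while `E` and `C_b` have order type at most `λ`, both meet each `δ ∈ S ∩ b` in a
bounded set; so on a tail of `C_δ` the function `g` is `g_e` for the least `e ≥ δ` in `E`, and
redefining `g` as `h_b` on `C_b` (when `b ∈ S`) spoils no such tail.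
-/

open Cardinal Set

theorem mk_inter_Iio_lt_of_otype_le {X : Set Ordinal.{0}} {κ : Cardinal.{0}}
    (hX : otype X ≤ Ordinal.lift.{1} κ.ord) {x : Ordinal.{0}} (hx : x ∈ X) :
    #↥(X ∩ Iio x) < Cardinal.lift.{1} κ := by
  have htypein : Ordinal.typein (α := X) (· < ·) ⟨x, hx⟩ < Ordinal.lift.{1} κ.ord :=
    (Ordinal.typein_lt_type _ _).trans_le hX
  rw [Cardinal.lift_ord, Cardinal.lt_ord, Ordinal.card_typein] at htypein
  exact (Cardinal.mk_congr (Equiv.subtypeSubtypeEquivSubtypeInter (· ∈ X) (· < x))).ge.trans_lt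
    htypein

theorem exists_lt_forall_lt_of_otype_le {X : Set Ordinal.{0}} {κ : Cardinal.{0}}
    (hX : otype X ≤ Ordinal.lift.{1} κ.ord) {δ : Ordinal.{0}} (hδ : δ.cof = κ)
    (hXδ : ∃ x ∈ X, δ ≤ x) : ∃ p < δ, ∀ ξ ∈ X, ξ < δ → ξ < p := by
  obtain ⟨x, hx, hδx⟩ := hXδ
  have hcard : #↥(X ∩ Iio δ) < (Ordinal.lift.{1} δ).cof := by
    rw [← Ordinal.lift_cof, hδ]
    exact (Cardinal.mk_le_mk_of_subset (inter_subset_inter_right X (Iio_subset_Iio hδx))).trans_lt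
      (mk_inter_Iio_lt_of_otype_le hX hx)
  refine ⟨_, Ordinal.sSup_add_one_lt_of_lt_cof hcard fun ξ hξ => hξ.2, fun ξ hξ hξδ => ?_⟩
  have hbdd : BddAbove ((· + 1) '' (X ∩ Iio δ)) := by
    refine ⟨δ, ?_⟩
    rintro _ ⟨η, hη, rfl⟩
    exact Order.add_one_le_of_lt hη.2
  exact (Order.lt_add_one_iff.2 le_rfl).trans_le (le_csSup hbdd (mem_image_of_mem _ ⟨hξ, hξδ⟩))

theorem exists_subset_Iio_cofinal_otype_eq (b : Ordinal.{0}) :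
    ∃ E ⊆ Iio b, (∀ ξ < b, ∃ e ∈ E, ξ ≤ e) ∧ otype E = Ordinal.lift.{1} b.cof.ord := by
  obtain ⟨s, hs, hstype⟩ := Ordinal.exists_ord_cof_eq (Iio b)
  refine ⟨Subtype.val '' s, image_subset_iff.2 fun x _ => x.2, fun ξ hξ => ?_, ?_⟩
  · obtain ⟨e, he, hξe⟩ := hs ⟨ξ, hξ⟩
    exact ⟨e, mem_image_of_mem _ he, hξe⟩
  · rw [Cardinal.lift_ord, Ordinal.lift_cof, ← Ordinal.cof_Iio, ← hstype]
    exact ((Subtype.strictMono_coe _).strictMonoOn s).orderIso.ordinalType_congr.symm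

def EventuallyAgreesOn {α β : Type*} [LinearOrder α] (C : Set α) (δ : α) (g k : α → β) : Prop :=
  ∃ γ < δ, ∀ ξ ∈ C, γ ≤ ξ → g ξ = k ξ

namespace EventuallyAgreesOn

variable {α β : Type*} [LinearOrder α] {C : Set α} {δ γ : α} {g g' k k' : α → β}

theorem mono (hg : EventuallyAgreesOn C δ g k) (hγ : γ < δ)
    (himp : ∀ ξ ∈ C, γ ≤ ξ → g ξ = k ξ → g' ξ = k' ξ) : EventuallyAgreesOn C δ g' k' := by
  obtain ⟨γ₀, hγ₀, hgk⟩ := hg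
  exact ⟨max γ₀ γ, max_lt hγ₀ hγ, fun ξ hξ hle =>
    himp ξ hξ (le_of_max_le_right hle) (hgk ξ hξ (le_of_max_le_left hle))⟩

end EventuallyAgreesOn

theorem eventuallyAgreesOn_sInf {α β : Type*} [ConditionallyCompleteLinearOrder α]
    [WellFoundedLT α] {C E : Set α} {δ : α} {G : α → α → β} {k : α → β} (hC : ∀ ξ ∈ C, ξ < δ)
    (hE : ∃ e ∈ E, δ ≤ e) (hbdd : ∃ p < δ, ∀ e ∈ E, e < δ → e < p)
    (hG : ∀ e ∈ E, δ ≤ e → EventuallyAgreesOn C δ (G e) k) :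
    EventuallyAgreesOn C δ (fun ξ => G (sInf {e ∈ E | ξ ≤ e}) ξ) k := by
  obtain ⟨p, hpδ, hp⟩ := hbdd
  have hq : sInf {e ∈ E | δ ≤ e} ∈ {e ∈ E | δ ≤ e} := csInf_mem hE
  refine (hG _ hq.1 hq.2).mono hpδ fun ξ hξ hpξ hagree => ?_
  have hsame : {e ∈ E | ξ ≤ e} = {e ∈ E | δ ≤ e} := by
    ext e
    refine and_congr_right fun he => ⟨fun hξe => not_lt.1 fun heδ => ?_, (hC ξ hξ).le.trans⟩
    exact (hp e he heδ).not_ge (hpξ.trans hξe)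
  simpa only [hsame] using hagree

section Uniformization

variable {lam : Cardinal.{0}} {S : Set Ordinal.{0}} {C : Ordinal.{0} → Set Ordinal.{0}}
  {h : Ordinal.{0} → Ordinal.{0} → Ordinal.{0}}

theorem exists_eventuallyAgreesOn_le_of_lt (hlam : lam ≠ 0) (hS : ∀ δ ∈ S, δ.cof = lam)
    (hCsub : ∀ δ ∈ S, ∀ ξ ∈ C δ, ξ < δ) (hCcof : ∀ δ ∈ S, ∀ α < δ, ∃ β ∈ C δ, α ≤ β)
    (hCtype : ∀ δ ∈ S, otype (C δ) ≤ Ordinal.lift.{1} lam.ord) {b : Ordinal.{0}}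
    {g : Ordinal.{0} → Ordinal.{0}} (hg : ∀ δ ∈ S, δ < b → EventuallyAgreesOn (C δ) δ g (h δ)) :
    ∃ g', ∀ δ ∈ S, δ ≤ b → EventuallyAgreesOn (C δ) δ g' (h δ) := by
  by_cases hbS : b ∈ S
  · classical
    refine ⟨(C b).piecewise (h b) g, fun δ hδ hδb => ?_⟩
    rcases hδb.lt_or_eq with hδb | rfl
    · obtain ⟨p, hpδ, hp⟩ :=
        exists_lt_forall_lt_of_otype_le (hCtype b hbS) (hS δ hδ) (hCcof b hbS δ hδb)
      refine (hg δ hδ hδb).mono hpδ fun ξ hξ hpξ hagree => ?_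
      rwa [piecewise_eq_of_notMem _ _ _ fun hξb => (hp ξ hξb (hCsub δ hδ ξ hξ)).not_ge hpξ]
    · have hδ0 : 0 < δ := Ordinal.cof_pos.1 ((hS δ hδ).symm ▸ pos_iff_ne_zero.2 hlam)
      exact ⟨0, hδ0, fun ξ hξ _ => piecewise_eq_of_mem _ _ _ hξ⟩
  · exact ⟨g, fun δ hδ hδb => hg δ hδ (hδb.lt_of_ne (ne_of_mem_of_not_mem hδ hbS))⟩

theorem exists_eventuallyAgreesOn_of_card_le (hlam : lam ≠ 0) (hS : ∀ δ ∈ S, δ.cof = lam)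
    (hCsub : ∀ δ ∈ S, ∀ ξ ∈ C δ, ξ < δ) (hCcof : ∀ δ ∈ S, ∀ α < δ, ∃ β ∈ C δ, α ≤ β)
    (hCtype : ∀ δ ∈ S, otype (C δ) ≤ Ordinal.lift.{1} lam.ord) (b : Ordinal.{0})
    (hb : b.card ≤ lam) : ∃ g, ∀ δ ∈ S, δ ≤ b → EventuallyAgreesOn (C δ) δ g (h δ) := by
  induction b using WellFoundedLT.induction with
  | _ b IH =>
  choose! G hG using fun e (he : e < b) => IH e he ((Ordinal.card_le_card he.le).trans hb)
  obtain ⟨E, hEb, hEcof, hEtype⟩ := exists_subset_Iio_cofinal_otype_eq b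
  have hEtype' : otype E ≤ Ordinal.lift.{1} lam.ord := by
    rw [hEtype, Ordinal.lift_le, Cardinal.ord_le_ord]
    exact (Ordinal.cof_le_card b).trans hb
  refine exists_eventuallyAgreesOn_le_of_lt (g := fun ξ => G (sInf {e ∈ E | ξ ≤ e}) ξ)
    hlam hS hCsub hCcof hCtype fun δ hδ hδb => ?_
  exact eventuallyAgreesOn_sInf (hCsub δ hδ) (hEcof δ hδb)
    (exists_lt_forall_lt_of_otype_le hEtype' (hS δ hδ) (hEcof δ hδb))
    fun e he hδe => hG e (hEb he) δ hδ hδe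

end Uniformization

theorem Q2Cond.exists_extend {lam : Cardinal.{0}} {S : Set Ordinal.{0}}
    {C : Ordinal.{0} → Set Ordinal.{0}} {h : Ordinal.{0} → Ordinal.{0} → Ordinal.{0}}
    {α α' : Ordinal.{0}} {f g : Ordinal.{0} → Ordinal.{0}} (hf : Q2Cond lam S C h α f)
    (hlam : lam ≠ 0) (hCsub : ∀ δ ∈ S, ∀ ξ ∈ C δ, ξ < δ) (hh : ∀ δ ∈ S, ∀ β ∈ C δ, h δ β < lam.ord)
    (hα' : α' < (Order.succ lam).ord) (hαα' : α ≤ α')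
    (hg : ∀ δ ∈ S, δ ≤ α' → EventuallyAgreesOn (C δ) δ g (h δ)) :
    ∃ f', Q2Cond lam S C h α' f' ∧ Q2Le α f α' f' := by
  have hlam₀ : 0 < lam.ord := Cardinal.ord_pos.2 (pos_iff_ne_zero.2 hlam)
  -- off the tails `g` may leave `λ`, so it is cut off; on them it equals `h δ ξ < λ`
  refine ⟨fun ξ => if ξ < α then f ξ else if g ξ < lam.ord then g ξ else 0,
    ⟨hα', fun ξ _ => ?_, fun δ hδ hδα' => ?_⟩, hαα', fun ξ hξ => if_pos hξ⟩
  · dsimp only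
    split_ifs with hξα hgξ
    exacts [hf.2.1 ξ hξα, hgξ, hlam₀]
  · rcases le_or_gt δ α with hδα | hαδ
    · obtain ⟨γ, hγ, hfγ⟩ := hf.2.2 δ hδ hδα
      exact ⟨γ, hγ, fun ξ hξ hγξ => (if_pos ((hCsub δ hδ ξ hξ).trans_le hδα)).trans (hfγ ξ hξ hγξ)⟩
    · refine (hg δ hδ hδα').mono hαδ fun ξ hξ hαξ hagree => ?_
      simp only [if_neg hαξ.not_gt, hagree, if_pos (hh δ hδ ξ hξ)]

theorem stmt12_general (lam : Cardinal.{0}) (hunc : Cardinal.aleph0 < lam)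
    (S : Set Ordinal.{0}) (hS : ∀ δ ∈ S, δ < (Order.succ lam).ord ∧ δ.cof = lam)
    (C : Ordinal.{0} → Set Ordinal.{0})
    (hC : ∀ δ ∈ S, IsClubBelow (C δ) δ ∧ otype (C δ) = Ordinal.lift.{1} lam.ord)
    (h : Ordinal.{0} → Ordinal.{0} → Ordinal.{0})
    (hh : ∀ δ ∈ S, ∀ β ∈ C δ, h δ β < lam.ord)
    (β : Ordinal.{0}) (hβ : β < (Order.succ lam).ord)
    (αf : Ordinal.{0}) (f : Ordinal.{0} → Ordinal.{0})
    (hcond : Q2Cond lam S C h αf f) :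
    ∃ (α' : Ordinal.{0}) (f' : Ordinal.{0} → Ordinal.{0}),
      Q2Cond lam S C h α' f' ∧ Q2Le αf f α' f' ∧ β < α' := by
  have hlam : lam ≠ 0 := (aleph0_pos.trans hunc).ne'
  have hCsub : ∀ δ ∈ S, ∀ ξ ∈ C δ, ξ < δ := fun δ hδ => (hC δ hδ).1.1
  set α' := Order.succ (max αf β)
  have hα' : α' < (Order.succ lam).ord :=
    (isSuccLimit_ord (hunc.le.trans (Order.le_succ lam))).succ_lt (max_lt hcond.1 hβ)
  obtain ⟨g, hg⟩ := exists_eventuallyAgreesOn_of_card_le (h := h) hlam (fun δ hδ => (hS δ hδ).2)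
    hCsub (fun δ hδ => (hC δ hδ).1.2.1) (fun δ hδ => (hC δ hδ).2.le) α'
    (Order.lt_succ_iff.1 (Cardinal.lt_ord.1 hα'))
  obtain ⟨f', hf', hle⟩ :=
    hcond.exists_extend hlam hCsub hh hα' ((le_max_left _ _).trans (Order.le_succ _)) hg
  exact ⟨α', f', hf', hle, Order.lt_succ_iff.2 (le_max_right _ _)⟩

/-- For `λ` regular uncountable, `S ⊆ {δ < λ⁺ : cf δ = λ}`, clubs `C_δ` of `δ` of order
type `λ` and colourings `h_δ : C_δ → λ`, for every `β < λ⁺` the set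
`I_β = {f ∈ Q²_{C̄,h̄} : β < α_f}` is dense: every condition has an extension whose domain
exceeds `β`. -/
theorem stmt12 (lam : Cardinal.{0}) (hreg : lam.IsRegular) (hunc : Cardinal.aleph0 < lam)
    (S : Set Ordinal.{0}) (hS : ∀ δ ∈ S, δ < (Order.succ lam).ord ∧ δ.cof = lam)
    (C : Ordinal.{0} → Set Ordinal.{0})
    (hC : ∀ δ ∈ S, IsClubBelow (C δ) δ ∧ otype (C δ) = Ordinal.lift.{1} lam.ord)
    (h : Ordinal.{0} → Ordinal.{0} → Ordinal.{0})
    (hh : ∀ δ ∈ S, ∀ β ∈ C δ, h δ β < lam.ord)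
    (β : Ordinal.{0}) (hβ : β < (Order.succ lam).ord)
    (αf : Ordinal.{0}) (f : Ordinal.{0} → Ordinal.{0})
    (hcond : Q2Cond lam S C h αf f) :
    ∃ (α' : Ordinal.{0}) (f' : Ordinal.{0} → Ordinal.{0}),
      Q2Cond lam S C h α' f' ∧ Q2Le αf f α' f' ∧ β < α' :=
  stmt12_general lam hunc S hS C hC h hh β hβ αf f hcond
end

section
/- Let κ be a regular uncountable cardinal, S ⊆ κ a stationary set consisting of limit ordinals, and for each δ ∈ S let C_δ ⊆ δ be unbounded in δ. Then there is no function f : κ → κ such that for every δ ∈ S the set {α ∈ C_δ : f(α) ≠ δ} is bounded below δ. -/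
/-!
The closure points of `f`, the `β < κ` with `f α < β` for all `α < β`, form a club of `κ`: a
supremum of closure points is one, and regularity of `κ` lets us close any `α < κ` off under `f`
in `ω` steps. By stationarity some `δ ∈ S` is a closure point. As `δ` is a limit and `C δ` is
unbounded in `δ`, some `α ∈ C δ` lies above the bound for `{α ∈ C δ : f α ≠ δ}`, so `f α = δ`,
whereas `f α < δ` because `δ` is a closure point.
-/

/-- `C` is a club of `κ`: a set of ordinals `< κ`, unbounded in `κ`, and closed: for
every nonempty `B ⊆ C` bounded below `κ`, `sup B ∈ C`. -/
def IsClubIn (C : Set Ordinal.{0}) (κo : Ordinal.{0}) : Prop :=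
  (∀ α ∈ C, α < κo) ∧ (∀ α < κo, ∃ β ∈ C, α ≤ β) ∧
    ∀ B ⊆ C, B.Nonempty → sSup B < κo → sSup B ∈ C

open Cardinal Ordinal Order Set

def closurePoints (f : Ordinal.{0} → Ordinal.{0}) (κo : Ordinal.{0}) : Set Ordinal.{0} :=
  {β | β < κo ∧ ∀ α < β, f α < β}

theorem sSup_mem_closurePoints {f : Ordinal.{0} → Ordinal.{0}} {κo : Ordinal.{0}}
    {B : Set Ordinal.{0}} (hB : B ⊆ closurePoints f κo) (hne : B.Nonempty) (hlt : sSup B < κo) :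
    sSup B ∈ closurePoints f κo := by
  refine ⟨hlt, fun α hα => ?_⟩
  obtain ⟨β, hβB, hαβ⟩ := exists_lt_of_lt_csSup hne hα
  have hbdd : BddAbove B := ⟨κo, fun γ hγ => (hB hγ).1.le⟩
  exact ((hB hβB).2 α hαβ).trans_le (le_csSup hbdd hβB)

theorem exists_mem_closurePoints_ge {κ : Cardinal.{0}} (hreg : κ.IsRegular) (hunc : ℵ₀ < κ)
    {f : Ordinal.{0} → Ordinal.{0}} (hf : ∀ α < κ.ord, f α < κ.ord) {α : Ordinal.{0}}
    (hα : α < κ.ord) : ∃ β ∈ closurePoints f κ.ord, α ≤ β := by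
  set g : Ordinal.{0} → Ordinal.{0} := fun β => ⨆ γ : Iio β, f γ + 1
  have hg : ∀ β < κ.ord, g β < κ.ord := fun β hβ =>
    lift_iSup_add_one_lt_of_lt_cof
      (by rwa [← lift_cof, hreg.cof_ord, Cardinal.mk_Iio_ordinal, Cardinal.lift_lift, Cardinal.lift_lt, ← Cardinal.lt_ord])
      fun γ => hf γ (γ.2.trans hβ)
  refine ⟨nfp g α, ⟨nfp_lt_ord_of_isRegular hreg hunc.ne' hg hα, fun γ hγ => ?_⟩, le_nfp g α⟩
  obtain ⟨n, hn⟩ := lt_nfp_iff.1 hγ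
  calc f γ < g (g^[n] α) := lt_iSup_add_one (fun γ : Iio (g^[n] α) => f γ) ⟨γ, hn⟩
    _ = g^[n + 1] α := (Function.iterate_succ_apply' g n α).symm
    _ ≤ nfp g α := iterate_le_nfp g α (n + 1)

theorem isClubIn_closurePoints {κ : Cardinal.{0}} (hreg : κ.IsRegular) (hunc : ℵ₀ < κ)
    {f : Ordinal.{0} → Ordinal.{0}} (hf : ∀ α < κ.ord, f α < κ.ord) :
    IsClubIn (closurePoints f κ.ord) κ.ord :=
  ⟨fun _ hβ => hβ.1, fun _ hα => exists_mem_closurePoints_ge hreg hunc hf hα,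
    fun _ hB hne hlt => sSup_mem_closurePoints hB hne hlt⟩

theorem exists_mem_apply_eq_of_bounded {f : Ordinal.{0} → Ordinal.{0}} {C : Set Ordinal.{0}}
    {δ γ : Ordinal.{0}} (hδ : IsSuccLimit δ) (hC : ∀ α < δ, ∃ β ∈ C, α ≤ β) (hγ : γ < δ)
    (hbdd : ∀ α ∈ C, f α ≠ δ → α ≤ γ) : ∃ α ∈ C, f α = δ := by
  obtain ⟨α, hαC, hγα⟩ := hC (succ γ) (hδ.succ_lt hγ)
  refine ⟨α, hαC, by_contra fun hne => ?_⟩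
  exact (succ_le_iff.1 hγα).not_ge (hbdd α hαC hne)

/-- Let `κ` be regular uncountable, `S ⊆ κ` a stationary set of limit ordinals, and for
`δ ∈ S` let `C_δ ⊆ δ` be unbounded in `δ`.  Then there is no `f : κ → κ` such that for
every `δ ∈ S` the set `{α ∈ C_δ : f α ≠ δ}` is bounded below `δ`. -/
theorem stmt14 (κ : Cardinal.{0}) (hreg : κ.IsRegular) (hunc : Cardinal.aleph0 < κ)
    (S : Set Ordinal.{0}) (hS : ∀ δ ∈ S, δ < κ.ord ∧ Order.IsSuccLimit δ)
    (hstat : ∀ Cl : Set Ordinal.{0}, IsClubIn Cl κ.ord → (S ∩ Cl).Nonempty)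
    (C : Ordinal.{0} → Set Ordinal.{0})
    (hC : ∀ δ ∈ S, (∀ α ∈ C δ, α < δ) ∧ ∀ α < δ, ∃ β ∈ C δ, α ≤ β) :
    ¬ ∃ f : Ordinal.{0} → Ordinal.{0}, (∀ α < κ.ord, f α < κ.ord) ∧
        ∀ δ ∈ S, ∃ γ < δ, ∀ α ∈ C δ, f α ≠ δ → α ≤ γ := by
  rintro ⟨f, hf, hguess⟩
  obtain ⟨δ, hδS, -, hδclosed⟩ := hstat _ (isClubIn_closurePoints hreg hunc hf)
  obtain ⟨γ, hγδ, hbdd⟩ := hguess δ hδS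
  obtain ⟨hCδ, hCunb⟩ := hC δ hδS
  obtain ⟨α, hαC, hfα⟩ := exists_mem_apply_eq_of_bounded (hS δ hδS).2 hCunb hγδ hbdd
  exact (hδclosed α (hCδ α hαC)).ne hfα
end

section
/- Let λ be a regular uncountable cardinal, S ⊆ {δ < λ⁺ : cf(δ) = λ} a set stationary in λ⁺, and for each δ ∈ S let C_δ be a club of δ of order type λ. Define h_δ : C_δ → δ by h_δ(α) = min(C_δ ∖ (α+1)). Then there is no function f : λ⁺ → λ⁺ such that for every δ ∈ S the set {α ∈ C_δ : f(α) ≠ h_δ(α)} is bounded below δ. -/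
universe u

open Ordinal Cardinal Order Set

theorem iSup_Iio_lt_of_card_lt_cof_s15 {ξ a : Ordinal.{u}} {g : Iio ξ → Ordinal.{u}}
    (hξ : ξ.card < a.cof) (hg : ∀ i, g i < a) : ⨆ i, g i < a :=
  lift_iSup_lt_of_lt_cof
    (by rwa [Cardinal.mk_Iio_ordinal, Cardinal.lift_lift, ← lift_cof, Cardinal.lift_lt]) hg

section Iterate

variable (f : Ordinal.{u} → Ordinal.{u}) (α : Ordinal.{u})

@[simp]
theorem transfiniteIterate_ordinal_zero : transfiniteIterate f (0 : Ordinal.{u}) α = α :=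
  transfiniteIterate_bot f α

@[simp]
theorem transfiniteIterate_ordinal_succ (ξ : Ordinal.{u}) :
    transfiniteIterate f (Order.succ ξ) α = f (transfiniteIterate f ξ α) :=
  transfiniteIterate_succ f α ξ (not_isMax ξ)

theorem transfiniteIterate_le_of_isSuccLimit {η ξ : Ordinal.{u}} (hξ : IsSuccLimit ξ)
    (hη : η < ξ) : transfiniteIterate f η α ≤ transfiniteIterate f ξ α := by
  rw [transfiniteIterate_limit f α ξ hξ]
  exact Ordinal.le_iSup (fun η : Iio ξ => transfiniteIterate f η.1 α) ⟨η, hη⟩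

variable {f α}

theorem transfiniteIterate_lt {κ ξ : Ordinal.{u}} (hf : ∀ β < κ, f β < κ) (hα : α < κ)
    (hξ : ξ.card < κ.cof) : transfiniteIterate f ξ α < κ := by
  induction ξ using limitRecOn with
  | zero => simpa using hα
  | add_one ξ ih =>
    rw [← succ_eq_add_one, transfiniteIterate_ordinal_succ]
    exact hf _ (ih ((card_le_card (le_succ ξ)).trans_lt (by rwa [succ_eq_add_one])))
  | limit ξ hlim ih =>
    rw [transfiniteIterate_limit f α ξ hlim]
    exact iSup_Iio_lt_of_card_lt_cof_s15 hξ fun η => ih η η.2 ((card_le_card η.2.le).trans_lt hξ)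

end Iterate

theorem isClubIn_setOf_forall_lt_imp_lt {c : Cardinal.{0}} (hc : c.IsRegular) (hc₀ : ℵ₀ < c)
    {F : Ordinal.{0} → Ordinal.{0}} (hF : ∀ α < c.ord, F α < c.ord) :
    IsClubIn {β | β < c.ord ∧ ∀ α < β, F α < β} c.ord := by
  have hcof : c.ord.cof = c := hc.cof_ord
  -- `nfp g α` is closed under `F` because `F < g β` on `Iio β`
  let g : Ordinal.{0} → Ordinal.{0} := fun β => Order.succ (⨆ α : Iio β, F α)
  have hg : ∀ β < c.ord, g β < c.ord := fun β hβ =>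
    (isSuccLimit_ord hc.aleph0_le).succ_lt <| iSup_Iio_lt_of_card_lt_cof_s15
      (by rw [hcof]; exact lt_ord.mp hβ) fun α => hF α (α.2.trans hβ)
  refine ⟨fun β hβ => hβ.1,
    fun α hα => ⟨nfp g α, ⟨nfp_lt_ord (by rwa [hcof]) hg hα, ?_⟩, le_nfp g α⟩,
    fun B hB hBne hBlt => ⟨hBlt, fun α hα => ?_⟩⟩
  · intro ξ hξ
    obtain ⟨n, hn⟩ := lt_nfp_iff.mp hξ
    calc F ξ ≤ ⨆ α : Iio (g^[n] α), F α :=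
          Ordinal.le_iSup (fun α : Iio (g^[n] α) => F α) ⟨ξ, hn⟩
      _ < g^[n + 1] α := by rw [Function.iterate_succ_apply']; exact lt_succ _
      _ ≤ nfp g α := iterate_le_nfp g α (n + 1)
  · have hBbdd : BddAbove B := ⟨c.ord, fun β hβ => (hB hβ).1.le⟩
    obtain ⟨β, hβB, hαβ⟩ := (lt_csSup_iff hBbdd hBne).mp hα
    exact ((hB hβB).2 α hαβ).trans_le (le_csSup hBbdd hβB)

noncomputable def nextIn (C : Set Ordinal.{0}) (α : Ordinal.{0}) : Ordinal.{0} :=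
  sInf {β | β ∈ C ∧ α < β}

theorem nextIn_mem_and_lt {C : Set Ordinal.{0}} {δ α : Ordinal.{0}} (hC : IsClubBelow C δ)
    (hδ : IsSuccLimit δ) (hα : α < δ) : nextIn C α ∈ C ∧ α < nextIn C α := by
  obtain ⟨β, hβC, hβ⟩ := hC.2.1 (succ α) (hδ.succ_lt hα)
  exact csInf_mem (s := {β | β ∈ C ∧ α < β}) ⟨β, hβC, succ_le_iff.mp hβ⟩

theorem transfiniteIterate_mem_and_strictMono {C : Set Ordinal.{0}}
    {δ α₀ : Ordinal.{0}} {f : Ordinal.{0} → Ordinal.{0}} (hC : IsClubBelow C δ)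
    (hδ : IsSuccLimit δ) (hα₀ : α₀ ∈ C) (hf : ∀ α ∈ C, α₀ ≤ α → f α = nextIn C α)
    {ξ : Ordinal.{0}} (hξ : ξ.card < δ.cof) :
    transfiniteIterate f ξ α₀ ∈ C ∧
      ∀ η < ξ, transfiniteIterate f η α₀ < transfiniteIterate f ξ α₀ := by
  induction ξ using limitRecOn with
  | zero => simpa using hα₀
  | add_one ξ ih =>
    rw [← succ_eq_add_one] at hξ ⊢
    obtain ⟨hmem, hmono⟩ := ih ((card_le_card (le_succ ξ)).trans_lt hξ)
    have hle : α₀ ≤ transfiniteIterate f ξ α₀ := by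
      rcases eq_zero_or_pos ξ with rfl | hpos
      · simp
      · simpa using (hmono 0 hpos).le
    obtain ⟨hnext, hlt⟩ := nextIn_mem_and_lt hC hδ (hC.1 _ hmem)
    rw [transfiniteIterate_ordinal_succ, hf _ hmem hle]
    refine ⟨hnext, fun η hη => ?_⟩
    rcases lt_succ_iff.mp hη |>.lt_or_eq with hηξ | rfl
    · exact (hmono η hηξ).trans hlt
    · exact hlt
  | limit ξ hlim ih =>
    have ih' : ∀ η : Iio ξ, transfiniteIterate f η.1 α₀ ∈ C ∧
        ∀ ζ < η.1, transfiniteIterate f ζ α₀ < transfiniteIterate f η.1 α₀ :=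
      fun η => ih η η.2 ((card_le_card η.2.le).trans_lt hξ)
    refine ⟨?_, fun η hη => (ih' ⟨succ η, hlim.succ_lt hη⟩).2 η (lt_succ η) |>.trans_le
      (transfiniteIterate_le_of_isSuccLimit f α₀ hlim (hlim.succ_lt hη))⟩
    rw [transfiniteIterate_limit f α₀ ξ hlim]
    exact hC.2.2 _ (range_subset_iff.mpr fun η => (ih' η).1) ⟨_, ⟨0, hlim.pos⟩, rfl⟩
      (iSup_Iio_lt_of_card_lt_cof_s15 hξ fun η => hC.1 _ (ih' η).1)

theorem exists_le_of_strictMonoOn_of_otype_eq {C : Set Ordinal.{0}} {o c : Ordinal.{0}}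
    (hC : otype C = Ordinal.lift.{1} o) {x : Ordinal.{0} → Ordinal.{0}}
    (hx : StrictMonoOn x (Iio o)) (hxC : ∀ ξ < o, x ξ ∈ C) (hc : c ∈ C) :
    ∃ ξ < o, c ≤ x ξ := by
  by_contra! hlt
  let r := Subrel ((· < ·) : Ordinal.{0} → Ordinal.{0} → Prop) (· ∈ C)
  let emb : Subrel ((· < ·) : Ordinal.{0} → Ordinal.{0} → Prop) (· < o) ↪r
      Subrel r (r · ⟨c, hc⟩) :=
    RelEmbedding.ofMonotone (fun ξ => ⟨⟨x ξ, hxC ξ ξ.2⟩, hlt ξ ξ.2⟩)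
      fun a b h => hx a.2 b.2 h
  have hle : Ordinal.lift.{1} o ≤ typein r ⟨c, hc⟩ := by
    rw [← typein_ordinal o, ← type_subrel, ← type_subrel]
    exact emb.ordinal_type_le
  exact hle.not_gt (hC ▸ typein_lt_type r ⟨c, hc⟩)

theorem stmt15_general (lam : Cardinal.{0}) (hreg : lam.IsRegular)
    (S : Set Ordinal.{0}) (hS : ∀ δ ∈ S, δ < (Order.succ lam).ord ∧ δ.cof = lam)
    (hstat : ∀ Cl : Set Ordinal.{0}, IsClubIn Cl (Order.succ lam).ord → (S ∩ Cl).Nonempty)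
    (C : Ordinal.{0} → Set Ordinal.{0})
    (hC : ∀ δ ∈ S, IsClubBelow (C δ) δ ∧ otype (C δ) = Ordinal.lift.{1} lam.ord) :
    ¬ ∃ f : Ordinal.{0} → Ordinal.{0},
        (∀ α < (Order.succ lam).ord, f α < (Order.succ lam).ord) ∧
        ∀ δ ∈ S, ∃ γ < δ, ∀ α ∈ C δ,
          f α ≠ sInf {β : Ordinal.{0} | β ∈ C δ ∧ α < β} → α ≤ γ := by
  rintro ⟨f, hf, hguess⟩
  have hsucc := isRegular_succ hreg.aleph0_le
  have hF : ∀ α < (succ lam).ord, transfiniteIterate f lam.ord α < (succ lam).ord :=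
    fun α hα => transfiniteIterate_lt hf hα (by simp [hsucc.cof_ord])
  obtain ⟨δ, hδS, -, hδF⟩ := hstat _ (isClubIn_setOf_forall_lt_imp_lt hsucc
    (hreg.aleph0_le.trans_lt (lt_succ lam)) hF)
  obtain ⟨hCδ, hot⟩ := hC δ hδS
  have hδcof := (hS δ hδS).2
  have hδ : IsSuccLimit δ := one_lt_cof_iff.mp (hδcof ▸ one_lt_aleph0.trans_le hreg.aleph0_le)
  obtain ⟨γ, hγδ, hγ⟩ := hguess δ hδS
  obtain ⟨hα₀, hγα₀⟩ := nextIn_mem_and_lt hCδ hδ hγδ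
  have hiter := fun ξ (hξ : ξ < lam.ord) => transfiniteIterate_mem_and_strictMono hCδ hδ hα₀
    (fun α hα hle => not_not.mp fun hne => (hγ α hα hne).not_gt (hγα₀.trans_le hle))
    (hδcof ▸ lt_ord.mp hξ)
  obtain ⟨c, hc, hFc⟩ := hCδ.2.1 _ (hδF _ (hCδ.1 _ hα₀))
  obtain ⟨ξ, hξ, hcξ⟩ := exists_le_of_strictMonoOn_of_otype_eq hot
    (fun η _ ξ hξ hηξ => (hiter ξ hξ).2 η hηξ) (fun ξ hξ => (hiter ξ hξ).1) hc
  have hlam := isSuccLimit_ord hreg.aleph0_le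
  exact (hcξ.trans_lt ((hiter _ (hlam.succ_lt hξ)).2 ξ (lt_succ ξ))).not_ge
    ((transfiniteIterate_le_of_isSuccLimit f _ hlam (hlam.succ_lt hξ)).trans hFc)

/-- Let `λ` be regular uncountable, `S ⊆ {δ < λ⁺ : cf δ = λ}` stationary in `λ⁺`, and for
`δ ∈ S` let `C_δ` be a club of `δ` of order type `λ`.  With `h_δ (α) = min (C_δ ∖ (α+1))`,
there is no `f : λ⁺ → λ⁺` such that for every `δ ∈ S` the set
`{α ∈ C_δ : f α ≠ h_δ α}` is bounded below `δ`. -/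
theorem stmt15 (lam : Cardinal.{0}) (hreg : lam.IsRegular) (hunc : Cardinal.aleph0 < lam)
    (S : Set Ordinal.{0}) (hS : ∀ δ ∈ S, δ < (Order.succ lam).ord ∧ δ.cof = lam)
    (hstat : ∀ Cl : Set Ordinal.{0}, IsClubIn Cl (Order.succ lam).ord → (S ∩ Cl).Nonempty)
    (C : Ordinal.{0} → Set Ordinal.{0})
    (hC : ∀ δ ∈ S, IsClubBelow (C δ) δ ∧ otype (C δ) = Ordinal.lift.{1} lam.ord) :
    ¬ ∃ f : Ordinal.{0} → Ordinal.{0},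
        (∀ α < (Order.succ lam).ord, f α < (Order.succ lam).ord) ∧
        ∀ δ ∈ S, ∃ γ < δ, ∀ α ∈ C δ,
          f α ≠ sInf {β : Ordinal.{0} | β ∈ C δ ∧ α < β} → α ≤ γ :=
  stmt15_general lam hreg S hS hstat C hC
end
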